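/- arXiv:1602.03736 — 7 statements merged into one kernel-verified Lean document; each statement's English description precedes it below -/
import Mathlib

section
/- Let A = {0, 5, 10, 15, 20, 25, 30, 35, 40, 45} and B = {0, 1, 2, 3, 4, 50, 51, 52, 53, 54} as finite sets of natural numbers. Then for every natural number k with k < 100 there exists a unique pair (a, b) with a ∈ A, b ∈ B and a + b = k. -/
theorem hundred_cell_solution_two (A B : Finset ℕ)
    (hA : A = {0, 5, 10, 15, 20, 25, 30, 35, 40, 45})
    (hB : B = {0, 1, 2, 3, 4, 50, 51, 52, 53, 54}) :
    ∀ k : ℕ, k < 100 →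
      ∃! p : ℕ × ℕ, p.1 ∈ A ∧ p.2 ∈ B ∧ p.1 + p.2 = k := by
  subst hA hB
  intro k hk
  refine ⟨(5 * ((k / 5) % 10), k % 5 + 50 * (k / 50)), ⟨?_, ?_, ?_⟩, ?_⟩
  · simp only [Finset.mem_insert, Finset.mem_singleton]
    omega
  · simp only [Finset.mem_insert, Finset.mem_singleton]
    omega
  · omega
  · rintro ⟨a, b⟩ ⟨ha, hb, hab⟩
    simp only [Finset.mem_insert, Finset.mem_singleton] at ha hb
    have : a = 5 * ((k / 5) % 10) ∧ b = k % 5 + 50 * (k / 50) := by omega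
    simp [Prod.ext_iff, this.1, this.2]
end

section
/- Let A = {0, 5, 10, 15, 20, 50, 55, 60, 65, 70} and B = {0, 1, 2, 3, 4, 25, 26, 27, 28, 29} as finite sets of natural numbers. Then for every natural number k with k < 100 there exists a unique pair (a, b) with a ∈ A, b ∈ B and a + b = k. -/
set_option maxHeartbeats 1000000 in
theorem hundred_cell_solution_three (A B : Finset ℕ)
    (hA : A = {0, 5, 10, 15, 20, 50, 55, 60, 65, 70})
    (hB : B = {0, 1, 2, 3, 4, 25, 26, 27, 28, 29}) :
    ∀ k : ℕ, k < 100 →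
      ∃! p : ℕ × ℕ, p.1 ∈ A ∧ p.2 ∈ B ∧ p.1 + p.2 = k := by
  subst hA hB
  have hex : ∀ k < 100, ∃ a ∈ ({0, 5, 10, 15, 20, 50, 55, 60, 65, 70} : Finset ℕ),
      ∃ b ∈ ({0, 1, 2, 3, 4, 25, 26, 27, 28, 29} : Finset ℕ), a + b = k := by decide
  have huniq : ∀ a ∈ ({0, 5, 10, 15, 20, 50, 55, 60, 65, 70} : Finset ℕ),
      ∀ b ∈ ({0, 1, 2, 3, 4, 25, 26, 27, 28, 29} : Finset ℕ),
      ∀ a' ∈ ({0, 5, 10, 15, 20, 50, 55, 60, 65, 70} : Finset ℕ),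
      ∀ b' ∈ ({0, 1, 2, 3, 4, 25, 26, 27, 28, 29} : Finset ℕ),
      a + b = a' + b' → a = a' ∧ b = b' := by decide
  intro k hk
  obtain ⟨a, ha, b, hb, hab⟩ := hex k hk
  refine ⟨(a, b), ⟨ha, hb, hab⟩, ?_⟩
  rintro ⟨a', b'⟩ ⟨ha', hb', hab'⟩
  obtain ⟨h1, h2⟩ := huniq a' ha' b' hb' a ha b hb (by omega)
  simp [h1, h2]
end

section
/- Let A = {0, 5, 20, 25, 40, 45, 60, 65, 80, 85} and B = {0, 1, 2, 3, 4, 10, 11, 12, 13, 14} as finite sets of natural numbers. Then for every natural number k with k < 100 there exists a unique pair (a, b) with a ∈ A, b ∈ B and a + b = k. -/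
theorem hundred_cell_solution_four (A B : Finset ℕ)
    (hA : A = {0, 5, 20, 25, 40, 45, 60, 65, 80, 85})
    (hB : B = {0, 1, 2, 3, 4, 10, 11, 12, 13, 14}) :
    ∀ k : ℕ, k < 100 →
      ∃! p : ℕ × ℕ, p.1 ∈ A ∧ p.2 ∈ B ∧ p.1 + p.2 = k := by
  intro k hk
  have hcard : ((A ×ˢ B).filter (fun p => p.1 + p.2 = k)).card = 1 := by
    subst hA hB
    interval_cases k <;> decide
  obtain ⟨p, hp⟩ := Finset.card_eq_one.mp hcard
  have hpmem : p ∈ (A ×ˢ B).filter (fun p => p.1 + p.2 = k) := by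
    rw [hp]; exact Finset.mem_singleton_self p
  rw [Finset.mem_filter, Finset.mem_product] at hpmem
  refine ⟨p, ⟨hpmem.1.1, hpmem.1.2, hpmem.2⟩, ?_⟩
  intro q hq
  have : q ∈ (A ×ˢ B).filter (fun p => p.1 + p.2 = k) := by
    rw [Finset.mem_filter, Finset.mem_product]
    exact ⟨⟨hq.1, hq.2.1⟩, hq.2.2⟩
  rw [hp, Finset.mem_singleton] at this
  exact this
end

section
/- Let A = {0, 2, 20, 22, 40, 42, 60, 62, 80, 82} and B = {0, 1, 4, 5, 8, 9, 12, 13, 16, 17} as finite sets of natural numbers. Then for every natural number k with k < 100 there exists a unique pair (a, b) with a ∈ A, b ∈ B and a + b = k. -/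
theorem hundred_cell_solution_seven (A B : Finset ℕ)
    (hA : A = {0, 2, 20, 22, 40, 42, 60, 62, 80, 82})
    (hB : B = {0, 1, 4, 5, 8, 9, 12, 13, 16, 17}) :
    ∀ k : ℕ, k < 100 →
      ∃! p : ℕ × ℕ, p.1 ∈ A ∧ p.2 ∈ B ∧ p.1 + p.2 = k := by
  subst hA hB
  intro k hk
  refine ⟨(20 * (k / 20) + k % 4 / 2 * 2, k % 20 - k % 4 / 2 * 2), ⟨?_, ?_, ?_⟩, ?_⟩
  · simp only [Finset.mem_insert, Finset.mem_singleton]; omega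
  · simp only [Finset.mem_insert, Finset.mem_singleton]; omega
  · omega
  · rintro ⟨x, y⟩ ⟨hx, hy, hxy⟩
    simp only [Finset.mem_insert, Finset.mem_singleton] at hx hy
    have h1 : x = 20 * (k / 20) + k % 4 / 2 * 2 := by omega
    have h2 : y = k % 20 - k % 4 / 2 * 2 := by omega
    simp [h1, h2]
end

section
/- There are exactly 14 ordered pairs (A, B) of 10-element finite sets of natural numbers such that every natural number k with k < 100 can be written uniquely as a + b with a ∈ A and b ∈ B; equivalently, up to swapping A and B there are exactly 7 such solutions. -/
open Finset

def Tiling (n : ℕ) (A B : Finset ℕ) : Prop :=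
  (∀ a ∈ A, ∀ b ∈ B, a + b < n) ∧
  ∀ k : ℕ, k < n → ∃! q : ℕ × ℕ, q.1 ∈ A ∧ q.2 ∈ B ∧ q.1 + q.2 = k

lemma tiling_zero_left {n : ℕ} {A B : Finset ℕ} (hn : 0 < n) (h : Tiling n A B) : 0 ∈ A := by
  obtain ⟨q, ⟨h1, h2, h3⟩, _⟩ := h.2 0 hn
  have : q.1 = 0 := by omega
  rwa [this] at h1

lemma tiling_zero_right {n : ℕ} {A B : Finset ℕ} (hn : 0 < n) (h : Tiling n A B) : 0 ∈ B := by
  obtain ⟨q, ⟨h1, h2, h3⟩, _⟩ := h.2 0 hn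
  have : q.2 = 0 := by omega
  rwa [this] at h2


lemma tiling_swap {n : ℕ} {A B : Finset ℕ} (h : Tiling n A B) : Tiling n B A := by
  obtain ⟨hs, hu⟩ := h
  refine ⟨fun b hb a ha => by rw [Nat.add_comm]; exact hs a ha b hb, fun k hk => ?_⟩
  obtain ⟨q, ⟨h1, h2, h3⟩, huq⟩ := hu k hk
  refine ⟨(q.2, q.1), ⟨h2, h1, by omega⟩, ?_⟩
  rintro ⟨x, y⟩ ⟨hx, hy, hxy⟩
  have := huq (y, x) ⟨hy, hx, by omega⟩
  simp only [Prod.ext_iff] at this ⊢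
  exact ⟨this.2.symm ▸ rfl, this.1.symm ▸ rfl⟩

lemma tiling_base {n : ℕ} {B : Finset ℕ} (h : Tiling n {0} B) : B = Finset.range n := by
  ext b
  simp only [Finset.mem_range]
  constructor
  · intro hb; have := h.1 0 (Finset.mem_singleton_self 0) b hb; omega
  · intro hb
    obtain ⟨q, ⟨h1, h2, h3⟩, _⟩ := h.2 b hb
    have hq1 : q.1 = 0 := by simpa using h1
    have : q.2 = b := by omega
    rwa [this] at h2

lemma step {n m : ℕ} {A B : Finset ℕ} (hn : 0 < n) (hT : Tiling n A B)
    (h1A : 1 ∈ A) (hmB : m ∈ B) (hm0 : m ≠ 0) (hmin : ∀ b ∈ B, b ≠ 0 → m ≤ b) :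
    ∃ n' A' B', n = m * n' ∧ Tiling n' A' B' ∧ 1 ∈ B' ∧
      A.card = m * A'.card ∧ B.card = B'.card ∧
      A = (A' ×ˢ Finset.range m).image (fun p => m * p.1 + p.2) ∧
      B = B'.image (fun x => m * x) ∧ 2 ≤ m := by
  obtain ⟨hsum, huniq⟩ := hT
  have h0A : 0 ∈ A := tiling_zero_left hn ⟨hsum, huniq⟩
  have h0B : 0 ∈ B := tiling_zero_right hn ⟨hsum, huniq⟩
  have hn1 : 1 < n := by have := hsum 1 h1A 0 h0B; omega
  have hm1 : m ≠ 1 := by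
    intro hm
    subst hm
    obtain ⟨q, hq, hu⟩ := huniq 1 hn1
    have e1 := hu (1, 0) ⟨h1A, h0B, rfl⟩
    have e2 := hu (0, 1) ⟨h0A, hmB, rfl⟩
    have : ((1:ℕ), (0:ℕ)) = (0, 1) := e1.trans e2.symm
    simp at this
  have key : ∀ k, k < n → ∀ a₁ b₁ a₂ b₂ : ℕ, a₁ ∈ A → b₁ ∈ B → a₁ + b₁ = k →
      a₂ ∈ A → b₂ ∈ B → a₂ + b₂ = k → a₁ = a₂ ∧ b₁ = b₂ := by
    intro k hk a₁ b₁ a₂ b₂ h1 h2 h3 h4 h5 h6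
    obtain ⟨q, _, hu⟩ := huniq k hk
    have e1 := hu (a₁, b₁) ⟨h1, h2, h3⟩
    have e2 := hu (a₂, b₂) ⟨h4, h5, h6⟩
    rw [← e2] at e1
    exact ⟨congrArg Prod.fst e1, congrArg Prod.snd e1⟩
  have hm2 : 2 ≤ m := by omega
  have hmltn : m < n := by have := hsum 0 h0A m hmB; omega
  -- every j < m is in A
  have hlow : ∀ j, j < m → j ∈ A := by
    intro j hj
    obtain ⟨q, ⟨hq1, hq2, hq3⟩, _⟩ := huniq j (by omega)
    have hq20 : q.2 = 0 := by
      by_contra hne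
      have := hmin q.2 hq2 hne
      omega
    have : q.1 = j := by omega
    rwa [this] at hq1
  -- gap lemma
  have lgap : ∀ a ∈ A, ∀ b ∈ B, m < b → a < b → b < a + m → False := by
    intro a ha b hb hmb hab hbam
    have h1 : a + m < n := hsum a ha m hmB
    have h2 : (a + m - b) ∈ A := hlow _ (by omega)
    have := (key (a + m) h1 a m (a + m - b) b ha hmB rfl h2 hb (by omega)).2
    omega
  -- the main structural induction
  have main : ∀ ℓ : ℕ, (ℓ ∈ B → m ∣ ℓ) ∧
      (∀ β, β ∈ A → m ∣ β → ∀ r, r < m → β + r = ℓ → ℓ ∈ A) ∧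
      (ℓ ∈ A → ℓ - ℓ % m ∈ A) := by
    intro ℓ
    induction ℓ using Nat.strong_induction_on with
    | _ ℓ IH =>
    have partA : ℓ ∈ B → m ∣ ℓ := by
      intro hℓB
      by_cases hdvd : m ∣ ℓ
      · exact hdvd
      exfalso
      have hℓn : ℓ < n := by have := hsum 0 h0A ℓ hℓB; omega
      have hs : ℓ % m ≠ 0 := fun h => hdvd (Nat.dvd_of_mod_eq_zero h)
      have hsm : ℓ % m < m := Nat.mod_lt _ (by omega)
      have hℓ0 : ℓ ≠ 0 := by intro h; rw [h] at hs; simp at hs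
      have hmℓ : m ≤ ℓ := hmin ℓ hℓB hℓ0
      have hdm : m * (ℓ / m) + ℓ % m = ℓ := Nat.div_add_mod ℓ m
      have hq1 : 1 ≤ ℓ / m := Nat.div_pos hmℓ (by omega)
      have hmq : m ≤ m * (ℓ / m) := Nat.le_mul_of_pos_right m hq1
      obtain ⟨⟨a', b'⟩, ⟨ha', hb', hab'⟩, _⟩ := huniq (m * (ℓ / m)) (by omega)
      simp only at ha' hb' hab'
      have hb'm : m ∣ b' := by
        rcases Nat.eq_zero_or_pos b' with h0 | hpos
        · simp [h0]
        · exact (IH b' (by omega)).1 hb'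
      have ha'm : m ∣ a' := by
        have hq : m ∣ m * (ℓ / m) := Dvd.intro _ rfl
        have : a' = m * (ℓ / m) - b' := by omega
        rw [this]; exact Nat.dvd_sub hq hb'm
      rcases Nat.eq_zero_or_pos a' with ha'0 | ha'pos
      · -- b' = m * (ℓ/m) ∈ B
        have hb'q : b' = m * (ℓ / m) := by omega
        have := (key ℓ hℓn (ℓ % m) (m * (ℓ / m)) 0 ℓ (hlow _ hsm) (hb'q ▸ hb')
          (by omega) h0A hℓB (by omega)).1
        omega
      rcases Nat.eq_zero_or_pos b' with hb'0 | hb'pos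
      · -- a' = m * (ℓ/m) ∈ A : gap
        have ha'q : a' = m * (ℓ / m) := by omega
        exact lgap a' ha' ℓ hℓB (by omega) (by omega) (by omega)
      · have hb'ge : m ≤ b' := hmin b' hb' (by omega)
        have ha's : a' + ℓ % m ∈ A :=
          (IH (a' + ℓ % m) (by omega)).2.1 a' ha' ha'm (ℓ % m) hsm rfl
        have := (key ℓ hℓn (a' + ℓ % m) b' 0 ℓ ha's hb' (by omega) h0A hℓB (by omega)).1
        omega
    have partB : ∀ β, β ∈ A → m ∣ β → ∀ r, r < m → β + r = ℓ → ℓ ∈ A := by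
      intro β hβ hβm r hr hβr
      rcases Nat.eq_zero_or_pos r with hr0 | hrpos
      · have : ℓ = β := by omega
        rw [this]; exact hβ
      have hℓn : ℓ < n := by have := hsum β hβ m hmB; omega
      have hprev : β + (r - 1) ∈ A := by
        rcases Nat.eq_zero_or_pos (r - 1) with h | h
        · have : β + (r - 1) = β := by omega
          rw [this]; exact hβ
        · exact (IH (β + (r - 1)) (by omega)).2.1 β hβ hβm (r - 1) (by omega) rfl
      obtain ⟨⟨a, b⟩, ⟨ha, hb, hab⟩, _⟩ := huniq ℓ hℓn
      simp only at ha hb hab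
      rcases Nat.eq_zero_or_pos b with hb0 | hbpos
      · have : a = ℓ := by omega
        rwa [this] at ha
      have hbm : m ≤ b := hmin b hb (by omega)
      rcases eq_or_lt_of_le (show b ≤ ℓ by omega) with hbℓ | hbℓ
      · -- ℓ ∈ B : gap with β
        exfalso
        have hℓB : ℓ ∈ B := hbℓ ▸ hb
        have hmℓ : m < ℓ := by
          by_contra h
          have hℓm : ℓ = m := by omega
          have hβpos : 0 < β := by omega
          have : m ≤ β := Nat.le_of_dvd hβpos hβm
          omega
        exact lgap β hβ ℓ hℓB hmℓ (by omega) (by omega)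
      · exfalso
        have hbdvd : m ∣ b := (IH b hbℓ).1 hb
        have haℓ : a < ℓ := by omega
        have har : a % m = r := by
          obtain ⟨b₀, rfl⟩ := hbdvd
          obtain ⟨β₀, hβ₀⟩ := hβm
          have h1 : (a + m * b₀) % m = a % m := Nat.add_mul_mod_self_left a m b₀
          have h2 : a + m * b₀ = m * β₀ + r := by omega
          rw [h2, Nat.mul_add_mod, Nat.mod_eq_of_lt hr] at h1
          omega
        have hae : m * (a / m) + r = a := by
          have := Nat.div_add_mod a m
          omega
        have hγA : m * (a / m) ∈ A := by
          have h2 := (IH a haℓ).2.2 ha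
          have : a - a % m = m * (a / m) := by omega
          rwa [this] at h2
        have ha1 : a - 1 ∈ A := by
          rcases Nat.eq_zero_or_pos (r - 1) with h | h
          · have : a - 1 = m * (a / m) := by omega
            rw [this]; exact hγA
          · have := (IH (a - 1) (by omega)).2.1 (m * (a / m)) hγA
              (Dvd.intro _ rfl) (r - 1) (by omega) (by omega)
            exact this
        have hc := (key (ℓ - 1) (by omega) (β + (r - 1)) 0 (a - 1) b hprev h0B
          (by omega) ha1 hb (by omega)).2
        omega
    have partC : ℓ ∈ A → ℓ - ℓ % m ∈ A := by
      intro hℓA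
      rcases Nat.eq_zero_or_pos (ℓ % m) with ht0 | htpos
      · rw [ht0]; simpa using hℓA
      have hℓn : ℓ < n := by have := hsum ℓ hℓA 0 h0B; omega
      have htm : ℓ % m < m := Nat.mod_lt _ (by omega)
      have hdm : m * (ℓ / m) + ℓ % m = ℓ := Nat.div_add_mod ℓ m
      obtain ⟨⟨a, b⟩, ⟨ha, hb, hab⟩, _⟩ := huniq (ℓ - ℓ % m) (by omega)
      simp only at ha hb hab
      have hbm : m ∣ b := by
        rcases Nat.eq_zero_or_pos b with h0 | hpos
        · simp [h0]
        · exact (IH b (by omega)).1 hb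
      rcases Nat.eq_zero_or_pos b with hb0 | hbpos
      · have : a = ℓ - ℓ % m := by omega
        rwa [this] at ha
      exfalso
      have hbge : m ≤ b := hmin b hb (by omega)
      have ham : m ∣ a := by
        have hdl : m ∣ (ℓ - ℓ % m) := by
          have : ℓ - ℓ % m = m * (ℓ / m) := by omega
          rw [this]; exact Dvd.intro _ rfl
        have : a = (ℓ - ℓ % m) - b := by omega
        rw [this]; exact Nat.dvd_sub hdl hbm
      have hat : a + ℓ % m ∈ A := (IH (a + ℓ % m) (by omega)).2.1 a ha ham (ℓ % m) htm rfl
      have hc := (key ℓ hℓn (a + ℓ % m) b ℓ 0 hat hb (by omega) hℓA h0B (by omega)).2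
      omega
    exact ⟨partA, partB, partC⟩
  have hBdvd : ∀ b ∈ B, m ∣ b := fun b hb => (main b).1 hb
  have hblock : ∀ x r : ℕ, m * x ∈ A → r < m → m * x + r ∈ A :=
    fun x r hx hr => (main (m * x + r)).2.1 (m * x) hx (Dvd.intro _ rfl) r hr rfl
  have hbot : ∀ a ∈ A, m * (a / m) ∈ A := by
    intro a ha
    have h2 := (main a).2.2 ha
    have h3 := Nat.div_add_mod a m
    have : a - a % m = m * (a / m) := by omega
    rwa [this] at h2
  -- m ∣ n
  have hmn : m ∣ n := by
    obtain ⟨⟨a, b⟩, ⟨ha, hb, hab⟩, _⟩ := huniq (n - 1) (by omega)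
    simp only at ha hb hab
    have hβ : m * (a / m) ∈ A := hbot a ha
    have hbl : m * (a / m) + (m - 1) ∈ A := hblock _ _ hβ (by omega)
    have hlt := hsum _ hbl b hb
    have hda := Nat.div_add_mod a m
    have hrm : a % m < m := Nat.mod_lt _ (by omega)
    have ham : a % m = m - 1 := by omega
    have hne : n = m * (a / m) + b + m := by omega
    rw [hne]
    exact Nat.dvd_add (Nat.dvd_add (Dvd.intro _ rfl) (hBdvd b hb)) dvd_rfl
  obtain ⟨n', rfl⟩ := hmn
  have hmemA : ∀ x : ℕ, (x ∈ (A.filter (fun a => a % m = 0)).image (· / m)) ↔ m * x ∈ A := by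
    intro x
    simp only [mem_image, mem_filter]
    constructor
    · rintro ⟨a, ⟨ha, ham⟩, rfl⟩
      have := Nat.div_add_mod a m
      have : m * (a / m) = a := by omega
      rwa [this]
    · intro hx
      exact ⟨m * x, ⟨hx, Nat.mul_mod_right m x⟩, Nat.mul_div_cancel_left x (by omega)⟩
  have hmemB : ∀ y : ℕ, (y ∈ B.image (· / m)) ↔ m * y ∈ B := by
    intro y
    simp only [mem_image]
    constructor
    · rintro ⟨b, hb, rfl⟩
      obtain ⟨b₀, rfl⟩ := hBdvd b hb
      rwa [Nat.mul_div_cancel_left b₀ (by omega)]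
    · intro hy
      exact ⟨m * y, hy, Nat.mul_div_cancel_left y (by omega)⟩
  have hn'pos : 0 < n' := by
    rcases Nat.eq_zero_or_pos n' with h | h
    · subst h; simp at hn
    · exact h
  set A' := (A.filter (fun a => a % m = 0)).image (· / m) with hA'def
  set B' := B.image (· / m) with hB'def
  have hAeq : A = (A' ×ˢ range m).image (fun p => m * p.1 + p.2) := by
    ext a
    constructor
    · intro ha
      exact mem_image.mpr ⟨(a / m, a % m), mem_product.mpr ⟨(hmemA _).2 (hbot a ha),
        mem_range.mpr (Nat.mod_lt _ (by omega))⟩, Nat.div_add_mod a m⟩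
    · intro ha
      obtain ⟨⟨x, r⟩, hmem, rfl⟩ := mem_image.mp ha
      obtain ⟨hx, hr⟩ := mem_product.mp hmem
      exact hblock x r ((hmemA x).1 hx) (mem_range.mp hr)
  have hBeq : B = B'.image (fun x => m * x) := by
    ext b
    constructor
    · intro hb
      obtain ⟨b₀, rfl⟩ := hBdvd b hb
      exact mem_image.mpr ⟨b₀, (hmemB b₀).2 hb, rfl⟩
    · intro hb
      obtain ⟨y, hy, rfl⟩ := mem_image.mp hb
      exact (hmemB y).1 hy
  have hcardA : A.card = m * A'.card := by
    rw [hAeq, card_image_of_injOn, card_product, card_range, Nat.mul_comm]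
    rintro ⟨x₁, r₁⟩ h₁ ⟨x₂, r₂⟩ h₂ he
    simp only [mem_coe, mem_product, mem_range] at h₁ h₂
    simp only at he
    have d1 : (m * x₁ + r₁) / m = x₁ := by
      rw [Nat.mul_add_div (by omega : 0 < m), Nat.div_eq_of_lt h₁.2]; omega
    have d2 : (m * x₂ + r₂) / m = x₂ := by
      rw [Nat.mul_add_div (by omega : 0 < m), Nat.div_eq_of_lt h₂.2]; omega
    have hx : x₁ = x₂ := by rw [← d1, ← d2, he]
    subst hx
    have : r₁ = r₂ := by omega
    simp [this]
  have hcardB : B.card = B'.card := by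
    rw [hB'def, card_image_of_injOn]
    intro b₁ h₁ b₂ h₂ he
    obtain ⟨c₁, rfl⟩ := hBdvd b₁ h₁
    obtain ⟨c₂, rfl⟩ := hBdvd b₂ (by simpa using h₂)
    simp only [Nat.mul_div_cancel_left _ (show 0 < m by omega)] at he
    rw [he]
  refine ⟨n', A', B', rfl, ⟨?_, ?_⟩, ?_, hcardA, hcardB, hAeq, hBeq, hm2⟩
  · -- sums bound
    intro x hx y hy
    have hx' := (hmemA x).1 hx
    have hy' := (hmemB y).1 hy
    have := hsum _ hx' _ hy'
    have h2 : m * (x + y) < m * n' := by rw [Nat.mul_add]; omega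
    exact Nat.lt_of_mul_lt_mul_left h2
  · -- unique representation
    intro k' hk'
    have hk : m * k' < m * n' := mul_lt_mul_of_pos_left hk' (by omega)
    obtain ⟨⟨a, b⟩, ⟨ha, hb, hab⟩, _⟩ := huniq (m * k') hk
    simp only at ha hb hab
    have hbm : m ∣ b := hBdvd b hb
    have ham : m ∣ a := by
      have : a = m * k' - b := by omega
      rw [this]; exact Nat.dvd_sub (Dvd.intro _ rfl) hbm
    obtain ⟨a₀, rfl⟩ := ham
    obtain ⟨b₀, rfl⟩ := hbm
    refine ⟨(a₀, b₀), ⟨(hmemA a₀).2 ha, (hmemB b₀).2 hb, ?_⟩, ?_⟩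
    · have h3 : m * (a₀ + b₀) = m * k' := by rw [Nat.mul_add]; omega
      exact Nat.eq_of_mul_eq_mul_left (by omega) h3
    · rintro ⟨x, y⟩ ⟨hx, hy, hxy⟩
      simp only at hx hy hxy
      have hx' := (hmemA x).1 hx
      have hy' := (hmemB y).1 hy
      have hsumxy : m * x + m * y = m * k' := by
        rw [← Nat.mul_add, hxy]
      have hkey := key (m * k') hk (m * x) (m * y) (m * a₀) (m * b₀) hx' hy' hsumxy ha hb hab
      have hx2 : x = a₀ := Nat.eq_of_mul_eq_mul_left (by omega) hkey.1
      have hy2 : y = b₀ := Nat.eq_of_mul_eq_mul_left (by omega) hkey.2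
      simp [hx2, hy2]
  · -- 1 ∈ B'
    apply (hmemB 1).2
    simpa using hmB

lemma eq_zero_singleton {A : Finset ℕ} (h1 : A.card = 1) (h0 : 0 ∈ A) : A = {0} := by
  obtain ⟨a, rfl⟩ := Finset.card_eq_one.mp h1
  rw [Finset.eq_of_mem_singleton h0]

lemma step' {n : ℕ} {A B : Finset ℕ} (hn : 0 < n) (hT : Tiling n A B)
    (h1A : 1 ∈ A) (hB2 : 2 ≤ B.card) :
    ∃ m n' A' B', n = m * n' ∧ Tiling n' A' B' ∧ 1 ∈ B' ∧
      A.card = m * A'.card ∧ B.card = B'.card ∧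
      A = (A' ×ˢ Finset.range m).image (fun p => m * p.1 + p.2) ∧
      B = B'.image (fun x => m * x) ∧ 2 ≤ m := by
  have h0B : 0 ∈ B := tiling_zero_right hn hT
  have hne : (B.erase 0).Nonempty := by
    rw [← Finset.card_pos, Finset.card_erase_of_mem h0B]
    omega
  set m := (B.erase 0).min' hne with hmdef
  have hmem := Finset.min'_mem (B.erase 0) hne
  rw [Finset.mem_erase] at hmem
  have hmin : ∀ b ∈ B, b ≠ 0 → m ≤ b := fun b hb hb0 =>
    Finset.min'_le _ _ (Finset.mem_erase.mpr ⟨hb0, hb⟩)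
  exact ⟨m, step hn hT h1A hmem.2 hmem.1 hmin⟩

lemma classify {A B : Finset ℕ} (hT : Tiling 100 A B) (hA : A.card = 10)
    (hB : B.card = 10) (h1 : 1 ∈ A) :
    (A = ({0,1,2,3,4,5,6,7,8,9} : Finset ℕ) ∧ B = ({0,10,20,30,40,50,60,70,80,90} : Finset ℕ)) ∨
    (A = ({0,1,20,21,40,41,60,61,80,81} : Finset ℕ) ∧ B = ({0,2,4,6,8,10,12,14,16,18} : Finset ℕ)) ∨
    (A = ({0,1,2,3,4,50,51,52,53,54} : Finset ℕ) ∧ B = ({0,5,10,15,20,25,30,35,40,45} : Finset ℕ)) ∨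
    (A = ({0,1,4,5,8,9,12,13,16,17} : Finset ℕ) ∧ B = ({0,2,20,22,40,42,60,62,80,82} : Finset ℕ)) ∨
    (A = ({0,1,10,11,20,21,30,31,40,41} : Finset ℕ) ∧ B = ({0,2,4,6,8,50,52,54,56,58} : Finset ℕ)) ∨
    (A = ({0,1,2,3,4,10,11,12,13,14} : Finset ℕ) ∧ B = ({0,5,20,25,40,45,60,65,80,85} : Finset ℕ)) ∨
    (A = ({0,1,2,3,4,25,26,27,28,29} : Finset ℕ) ∧ B = ({0,5,10,15,20,50,55,60,65,70} : Finset ℕ)) := by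
  obtain ⟨m₁, n₁, A₁, B₁, he₁, hT₁, h1B₁, hcA₁, hcB₁, hAeq₁, hBeq₁, hm₁⟩ :=
    step' (by norm_num) hT h1 (by omega)
  have hle₁ : m₁ ≤ 10 := Nat.le_of_dvd (by norm_num) ⟨A₁.card, by omega⟩
  interval_cases m₁ <;> try (exfalso; omega)
  · -- m₁ = 2
    have hn₁ : n₁ = 50 := by omega
    subst hn₁
    obtain ⟨m₂, n₂, B₂, A₂, he₂, hT₂, h1A₂, hcB₂, hcA₂, hBeq₂, hAeq₂, hm₂⟩ :=
      step' (by norm_num) (tiling_swap hT₁) h1B₁ (by omega)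
    have hle₂ : m₂ ≤ 10 := Nat.le_of_dvd (by norm_num) ⟨B₂.card, by omega⟩
    interval_cases m₂ <;> try (exfalso; omega)
    · -- m₂ = 2, n₂ = 25
      have hn₂ : n₂ = 25 := by omega
      subst hn₂
      obtain ⟨m₃, n₃, A₃, B₃, he₃, hT₃, h1B₃, hcA₃, hcB₃, hAeq₃, hBeq₃, hm₃⟩ :=
        step' (by norm_num) (tiling_swap hT₂) h1A₂ (by omega)
      have hle₃ : m₃ ≤ 5 := Nat.le_of_dvd (by norm_num) ⟨A₃.card, by omega⟩
      interval_cases m₃ <;> try (exfalso; omega)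
      have hn₃ : n₃ = 5 := by omega
      subst hn₃
      have hA₃ : A₃ = {0} := eq_zero_singleton (by omega) (tiling_zero_left (by norm_num) hT₃)
      have hB₃ : B₃ = Finset.range 5 := tiling_base (hA₃ ▸ hT₃)
      refine Or.inr (Or.inr (Or.inr (Or.inl ⟨?_, ?_⟩)))
      · rw [hAeq₁, hAeq₂, hAeq₃, hA₃]; decide
      · rw [hBeq₁, hBeq₂, hBeq₃, hB₃]; decide
    · -- m₂ = 5, n₂ = 10
      have hn₂ : n₂ = 10 := by omega
      subst hn₂
      obtain ⟨m₃, n₃, A₃, B₃, he₃, hT₃, h1B₃, hcA₃, hcB₃, hAeq₃, hBeq₃, hm₃⟩ :=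
        step' (by norm_num) (tiling_swap hT₂) h1A₂ (by omega)
      have hle₃ : m₃ ≤ 5 := Nat.le_of_dvd (by norm_num) ⟨A₃.card, by omega⟩
      interval_cases m₃ <;> try (exfalso; omega)
      have hn₃ : n₃ = 2 := by omega
      subst hn₃
      have hA₃ : A₃ = {0} := eq_zero_singleton (by omega) (tiling_zero_left (by norm_num) hT₃)
      have hB₃ : B₃ = Finset.range 2 := tiling_base (hA₃ ▸ hT₃)
      refine Or.inr (Or.inr (Or.inr (Or.inr (Or.inl ⟨?_, ?_⟩))))
      · rw [hAeq₁, hAeq₂, hAeq₃, hA₃]; decide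
      · rw [hBeq₁, hBeq₂, hBeq₃, hB₃]; decide
    · -- m₂ = 10, n₂ = 5
      have hn₂ : n₂ = 5 := by omega
      subst hn₂
      have hB₂ : B₂ = {0} := eq_zero_singleton (by omega) (tiling_zero_left (by norm_num) hT₂)
      have hA₂ : A₂ = Finset.range 5 := tiling_base (hB₂ ▸ hT₂)
      refine Or.inr (Or.inl ⟨?_, ?_⟩)
      · rw [hAeq₁, hAeq₂, hA₂]; decide
      · rw [hBeq₁, hBeq₂, hB₂]; decide
  · -- m₁ = 5
    have hn₁ : n₁ = 20 := by omega
    subst hn₁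
    obtain ⟨m₂, n₂, B₂, A₂, he₂, hT₂, h1A₂, hcB₂, hcA₂, hBeq₂, hAeq₂, hm₂⟩ :=
      step' (by norm_num) (tiling_swap hT₁) h1B₁ (by omega)
    have hle₂ : m₂ ≤ 10 := Nat.le_of_dvd (by norm_num) ⟨B₂.card, by omega⟩
    interval_cases m₂ <;> try (exfalso; omega)
    · -- m₂ = 2, n₂ = 10
      have hn₂ : n₂ = 10 := by omega
      subst hn₂
      obtain ⟨m₃, n₃, A₃, B₃, he₃, hT₃, h1B₃, hcA₃, hcB₃, hAeq₃, hBeq₃, hm₃⟩ :=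
        step' (by norm_num) (tiling_swap hT₂) h1A₂ (by omega)
      have hle₃ : m₃ ≤ 2 := Nat.le_of_dvd (by norm_num) ⟨A₃.card, by omega⟩
      interval_cases m₃ <;> try (exfalso; omega)
      have hn₃ : n₃ = 5 := by omega
      subst hn₃
      have hA₃ : A₃ = {0} := eq_zero_singleton (by omega) (tiling_zero_left (by norm_num) hT₃)
      have hB₃ : B₃ = Finset.range 5 := tiling_base (hA₃ ▸ hT₃)
      refine Or.inr (Or.inr (Or.inr (Or.inr (Or.inr (Or.inl ⟨?_, ?_⟩)))))
      · rw [hAeq₁, hAeq₂, hAeq₃, hA₃]; decide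
      · rw [hBeq₁, hBeq₂, hBeq₃, hB₃]; decide
    · -- m₂ = 5, n₂ = 4
      have hn₂ : n₂ = 4 := by omega
      subst hn₂
      obtain ⟨m₃, n₃, A₃, B₃, he₃, hT₃, h1B₃, hcA₃, hcB₃, hAeq₃, hBeq₃, hm₃⟩ :=
        step' (by norm_num) (tiling_swap hT₂) h1A₂ (by omega)
      have hle₃ : m₃ ≤ 2 := Nat.le_of_dvd (by norm_num) ⟨A₃.card, by omega⟩
      interval_cases m₃ <;> try (exfalso; omega)
      have hn₃ : n₃ = 2 := by omega
      subst hn₃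
      have hA₃ : A₃ = {0} := eq_zero_singleton (by omega) (tiling_zero_left (by norm_num) hT₃)
      have hB₃ : B₃ = Finset.range 2 := tiling_base (hA₃ ▸ hT₃)
      refine Or.inr (Or.inr (Or.inr (Or.inr (Or.inr (Or.inr (⟨?_, ?_⟩))))))
      · rw [hAeq₁, hAeq₂, hAeq₃, hA₃]; decide
      · rw [hBeq₁, hBeq₂, hBeq₃, hB₃]; decide
    · -- m₂ = 10, n₂ = 2
      have hn₂ : n₂ = 2 := by omega
      subst hn₂
      have hB₂ : B₂ = {0} := eq_zero_singleton (by omega) (tiling_zero_left (by norm_num) hT₂)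
      have hA₂ : A₂ = Finset.range 2 := tiling_base (hB₂ ▸ hT₂)
      refine Or.inr (Or.inr (Or.inl ⟨?_, ?_⟩))
      · rw [hAeq₁, hAeq₂, hA₂]; decide
      · rw [hBeq₁, hBeq₂, hB₂]; decide
  · -- m₁ = 10
    have hn₁ : n₁ = 10 := by omega
    subst hn₁
    have hA₁ : A₁ = {0} := eq_zero_singleton (by omega) (tiling_zero_left (by norm_num) hT₁)
    have hB₁ : B₁ = Finset.range 10 := tiling_base (hA₁ ▸ hT₁)
    refine Or.inl ⟨?_, ?_⟩
    · rw [hAeq₁, hA₁]; decide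
    · rw [hBeq₁, hB₁]; decide


lemma sums_lt {n : ℕ} {A B : Finset ℕ} (hcard : A.card * B.card = n)
    (h : ∀ k : ℕ, k < n → ∃! q : ℕ × ℕ, q.1 ∈ A ∧ q.2 ∈ B ∧ q.1 + q.2 = k) :
    ∀ a ∈ A, ∀ b ∈ B, a + b < n := by
  set T : Finset (ℕ × ℕ) := (A ×ˢ B).filter (fun q => q.1 + q.2 < n) with hT
  have hTsub : T ⊆ A ×ˢ B := filter_subset _ _
  have himg : T.image (fun q => q.1 + q.2) = range n := by
    ext k
    simp only [mem_image, mem_range, hT, mem_filter, mem_product]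
    constructor
    · rintro ⟨q, ⟨_, hlt⟩, rfl⟩; exact hlt
    · intro hk
      obtain ⟨q, ⟨h1, h2, h3⟩, _⟩ := h k hk
      exact ⟨q, ⟨⟨h1, h2⟩, h3 ▸ hk⟩, h3⟩
  have hcardT : n ≤ T.card := by
    calc n = (T.image (fun q => q.1 + q.2)).card := by rw [himg, card_range]
    _ ≤ T.card := card_image_le
  have hPT : A ×ˢ B = T := by
    apply (eq_of_subset_of_card_le hTsub ?_).symm
    rw [card_product, hcard]; exact hcardT
  intro a ha b hb
  have hmem : (a, b) ∈ T := by rw [← hPT]; exact mem_product.mpr ⟨ha, hb⟩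
  rw [hT, mem_filter] at hmem
  exact hmem.2

lemma tiling_of_check (A B : Finset ℕ)
    (h : ∀ k, k < 100 → ((A ×ˢ B).filter (fun q => q.1 + q.2 = k)).card = 1) :
    ∀ k : ℕ, k < 100 → ∃! q : ℕ × ℕ, q.1 ∈ A ∧ q.2 ∈ B ∧ q.1 + q.2 = k := by
  intro k hk
  obtain ⟨q, hq⟩ := Finset.card_eq_one.mp (h k hk)
  have hqmem : q ∈ (A ×ˢ B).filter (fun q => q.1 + q.2 = k) := by
    rw [hq]; exact Finset.mem_singleton_self q
  rw [Finset.mem_filter, Finset.mem_product] at hqmem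
  refine ⟨q, ⟨hqmem.1.1, hqmem.1.2, hqmem.2⟩, ?_⟩
  rintro ⟨x, y⟩ ⟨hx, hy, hxy⟩
  have : (x, y) ∈ (A ×ˢ B).filter (fun q => q.1 + q.2 = k) := by
    rw [Finset.mem_filter, Finset.mem_product]
    exact ⟨⟨hx, hy⟩, hxy⟩
  rw [hq, Finset.mem_singleton] at this
  exact this

def solSet : Finset (Finset ℕ × Finset ℕ) :=
  {(({0,1,2,3,4,5,6,7,8,9} : Finset ℕ), ({0,10,20,30,40,50,60,70,80,90} : Finset ℕ)),
   (({0,1,20,21,40,41,60,61,80,81} : Finset ℕ), ({0,2,4,6,8,10,12,14,16,18} : Finset ℕ)),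
   (({0,1,2,3,4,50,51,52,53,54} : Finset ℕ), ({0,5,10,15,20,25,30,35,40,45} : Finset ℕ)),
   (({0,1,4,5,8,9,12,13,16,17} : Finset ℕ), ({0,2,20,22,40,42,60,62,80,82} : Finset ℕ)),
   (({0,1,10,11,20,21,30,31,40,41} : Finset ℕ), ({0,2,4,6,8,50,52,54,56,58} : Finset ℕ)),
   (({0,1,2,3,4,10,11,12,13,14} : Finset ℕ), ({0,5,20,25,40,45,60,65,80,85} : Finset ℕ)),
   (({0,1,2,3,4,25,26,27,28,29} : Finset ℕ), ({0,5,10,15,20,50,55,60,65,70} : Finset ℕ)),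
   (({0,10,20,30,40,50,60,70,80,90} : Finset ℕ), ({0,1,2,3,4,5,6,7,8,9} : Finset ℕ)),
   (({0,2,4,6,8,10,12,14,16,18} : Finset ℕ), ({0,1,20,21,40,41,60,61,80,81} : Finset ℕ)),
   (({0,5,10,15,20,25,30,35,40,45} : Finset ℕ), ({0,1,2,3,4,50,51,52,53,54} : Finset ℕ)),
   (({0,2,20,22,40,42,60,62,80,82} : Finset ℕ), ({0,1,4,5,8,9,12,13,16,17} : Finset ℕ)),
   (({0,2,4,6,8,50,52,54,56,58} : Finset ℕ), ({0,1,10,11,20,21,30,31,40,41} : Finset ℕ)),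
   (({0,5,20,25,40,45,60,65,80,85} : Finset ℕ), ({0,1,2,3,4,10,11,12,13,14} : Finset ℕ)),
   (({0,5,10,15,20,50,55,60,65,70} : Finset ℕ), ({0,1,2,3,4,25,26,27,28,29} : Finset ℕ))}

set_option maxRecDepth 100000 in
set_option maxHeartbeats 2000000 in
theorem hundred_cell_count :
    {p : Finset ℕ × Finset ℕ |
        p.1.card = 10 ∧ p.2.card = 10 ∧
        ∀ k : ℕ, k < 100 →
          ∃! q : ℕ × ℕ, q.1 ∈ p.1 ∧ q.2 ∈ p.2 ∧ q.1 + q.2 = k}.ncard = 14 := by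
  have hset : {p : Finset ℕ × Finset ℕ |
      p.1.card = 10 ∧ p.2.card = 10 ∧
      ∀ k : ℕ, k < 100 →
        ∃! q : ℕ × ℕ, q.1 ∈ p.1 ∧ q.2 ∈ p.2 ∧ q.1 + q.2 = k} = ↑solSet := by
    ext p
    simp only [Set.mem_setOf_eq, Finset.mem_coe]
    constructor
    · rintro ⟨h1, h2, h3⟩
      have hsums := sums_lt (by rw [h1, h2]) h3
      have hT : Tiling 100 p.1 p.2 := ⟨hsums, h3⟩
      have h1mem : 1 ∈ p.1 ∨ 1 ∈ p.2 := by
        obtain ⟨q, ⟨hq1, hq2, hq3⟩, _⟩ := h3 1 (by norm_num)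
        rcases (show q.1 = 1 ∧ q.2 = 0 ∨ q.1 = 0 ∧ q.2 = 1 by omega) with ⟨e1, e2⟩ | ⟨e1, e2⟩
        · left; rwa [e1] at hq1
        · right; rwa [e2] at hq2
      rcases h1mem with h1m | h1m
      · rcases classify hT h1 h2 h1m with hc | hc | hc | hc | hc | hc | hc
        · have hp : p = (({0,1,2,3,4,5,6,7,8,9} : Finset ℕ), ({0,10,20,30,40,50,60,70,80,90} : Finset ℕ)) :=
            Prod.ext hc.1 hc.2
          rw [hp]; decide
        · have hp : p = (({0,1,20,21,40,41,60,61,80,81} : Finset ℕ), ({0,2,4,6,8,10,12,14,16,18} : Finset ℕ)) :=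
            Prod.ext hc.1 hc.2
          rw [hp]; decide
        · have hp : p = (({0,1,2,3,4,50,51,52,53,54} : Finset ℕ), ({0,5,10,15,20,25,30,35,40,45} : Finset ℕ)) :=
            Prod.ext hc.1 hc.2
          rw [hp]; decide
        · have hp : p = (({0,1,4,5,8,9,12,13,16,17} : Finset ℕ), ({0,2,20,22,40,42,60,62,80,82} : Finset ℕ)) :=
            Prod.ext hc.1 hc.2
          rw [hp]; decide
        · have hp : p = (({0,1,10,11,20,21,30,31,40,41} : Finset ℕ), ({0,2,4,6,8,50,52,54,56,58} : Finset ℕ)) :=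
            Prod.ext hc.1 hc.2
          rw [hp]; decide
        · have hp : p = (({0,1,2,3,4,10,11,12,13,14} : Finset ℕ), ({0,5,20,25,40,45,60,65,80,85} : Finset ℕ)) :=
            Prod.ext hc.1 hc.2
          rw [hp]; decide
        · have hp : p = (({0,1,2,3,4,25,26,27,28,29} : Finset ℕ), ({0,5,10,15,20,50,55,60,65,70} : Finset ℕ)) :=
            Prod.ext hc.1 hc.2
          rw [hp]; decide
      · rcases classify (tiling_swap hT) h2 h1 h1m with hc | hc | hc | hc | hc | hc | hc
        · have hp : p = (({0,10,20,30,40,50,60,70,80,90} : Finset ℕ), ({0,1,2,3,4,5,6,7,8,9} : Finset ℕ)) :=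
            Prod.ext hc.2 hc.1
          rw [hp]; decide
        · have hp : p = (({0,2,4,6,8,10,12,14,16,18} : Finset ℕ), ({0,1,20,21,40,41,60,61,80,81} : Finset ℕ)) :=
            Prod.ext hc.2 hc.1
          rw [hp]; decide
        · have hp : p = (({0,5,10,15,20,25,30,35,40,45} : Finset ℕ), ({0,1,2,3,4,50,51,52,53,54} : Finset ℕ)) :=
            Prod.ext hc.2 hc.1
          rw [hp]; decide
        · have hp : p = (({0,2,20,22,40,42,60,62,80,82} : Finset ℕ), ({0,1,4,5,8,9,12,13,16,17} : Finset ℕ)) :=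
            Prod.ext hc.2 hc.1
          rw [hp]; decide
        · have hp : p = (({0,2,4,6,8,50,52,54,56,58} : Finset ℕ), ({0,1,10,11,20,21,30,31,40,41} : Finset ℕ)) :=
            Prod.ext hc.2 hc.1
          rw [hp]; decide
        · have hp : p = (({0,5,20,25,40,45,60,65,80,85} : Finset ℕ), ({0,1,2,3,4,10,11,12,13,14} : Finset ℕ)) :=
            Prod.ext hc.2 hc.1
          rw [hp]; decide
        · have hp : p = (({0,5,10,15,20,50,55,60,65,70} : Finset ℕ), ({0,1,2,3,4,25,26,27,28,29} : Finset ℕ)) :=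
            Prod.ext hc.2 hc.1
          rw [hp]; decide
    · intro hp
      simp only [solSet, Finset.mem_insert, Finset.mem_singleton] at hp
      rcases hp with rfl | rfl | rfl | rfl | rfl | rfl | rfl | rfl | rfl | rfl | rfl | rfl | rfl | rfl <;>
        exact ⟨by decide, by decide, tiling_of_check _ _ (by decide)⟩
  rw [hset, Set.ncard_coe_finset]
  decide
end

section
/- There are exactly 6 ordered pairs (A, B) of 4-element finite sets of natural numbers such that every natural number k with k < 16 can be written uniquely as a + b with a ∈ A and b ∈ B; equivalently, up to swapping A and B there are exactly 3 such solutions. -/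
open Finset

def fcode (A : Finset ℕ) : ℕ := ∑ a ∈ A, 17^a
def Ncode : ℕ := ∑ k ∈ Finset.range 16, 17^k
def Pset : Finset (Finset ℕ) :=
  Finset.filter (fun A => 0 ∈ A) ((Finset.range 16).powersetCard 4)
def Tset : Finset (Finset ℕ × Finset ℕ) :=
  Pset.biUnion (fun A =>
    (Finset.filter (fun B => fcode A * fcode B = Ncode) Pset).image (fun B => (A, B)))

lemma mem_Tset (p : Finset ℕ × Finset ℕ) :
    p ∈ Tset ↔ p.1 ∈ Pset ∧ p.2 ∈ Pset ∧ fcode p.1 * fcode p.2 = Ncode := by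
  obtain ⟨A, B⟩ := p
  simp only [Tset, Finset.mem_biUnion, Finset.mem_image, Finset.mem_filter, Prod.mk.injEq]
  constructor
  · rintro ⟨A', hA', B', ⟨hB', hf⟩, rfl, rfl⟩
    exact ⟨hA', hB', hf⟩
  · rintro ⟨hA, hB, hf⟩
    exact ⟨A, hA, B, ⟨hB, hf⟩, rfl, rfl⟩

lemma digit_unique : ∀ (n : ℕ) (r s : ℕ → ℕ),
    (∀ i, i < n → r i < 17) → (∀ i, i < n → s i < 17) →
    (∑ i ∈ Finset.range n, r i * 17^i) = (∑ i ∈ Finset.range n, s i * 17^i) →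
    ∀ i, i < n → r i = s i := by
  intro n
  induction n with
  | zero => intro r s _ _ _ i hi; omega
  | succ m ih =>
    intro r s hr hs hsum i hi
    have e1 : ∀ (r : ℕ → ℕ), ∑ i ∈ Finset.range (m+1), r i * 17^i
        = r 0 + 17 * ∑ i ∈ Finset.range m, r (i+1) * 17^i := by
      intro r
      rw [Finset.sum_range_succ' (fun i => r i * 17^i) m, Finset.mul_sum]
      have : ∀ j ∈ Finset.range m, r (j+1) * 17^(j+1) = 17 * (r (j+1) * 17^j) := by
        intro j _; ring
      rw [Finset.sum_congr rfl this]
      omega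
    rw [e1 r, e1 s] at hsum
    have h0 : r 0 < 17 := hr 0 (by omega)
    have h0' : s 0 < 17 := hs 0 (by omega)
    have key : r 0 = s 0 ∧ (∑ i ∈ Finset.range m, r (i+1) * 17^i)
        = (∑ i ∈ Finset.range m, s (i+1) * 17^i) := by omega
    rcases Nat.eq_zero_or_pos i with h | h
    · subst h; exact key.1
    · obtain ⟨j, rfl⟩ : ∃ j, i = j + 1 := ⟨i - 1, by omega⟩
      exact ih (fun i => r (i+1)) (fun i => s (i+1))
        (fun i hi => hr (i+1) (by omega)) (fun i hi => hs (i+1) (by omega))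
        key.2 j (by omega)

lemma exu_iff (A B : Finset ℕ) (k : ℕ) :
    (∃! q : ℕ × ℕ, q.1 ∈ A ∧ q.2 ∈ B ∧ q.1 + q.2 = k) ↔
    ((A ×ˢ B).filter (fun q => q.1 + q.2 = k)).card = 1 := by
  constructor
  · rintro ⟨q, hq, huniq⟩
    rw [Finset.card_eq_one]
    refine ⟨q, ?_⟩
    ext x
    simp only [Finset.mem_filter, Finset.mem_product, Finset.mem_singleton]
    constructor
    · rintro ⟨⟨h1, h2⟩, h3⟩; exact huniq x ⟨h1, h2, h3⟩
    · rintro rfl; exact ⟨⟨hq.1, hq.2.1⟩, hq.2.2⟩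
  · intro hcard
    rw [Finset.card_eq_one] at hcard
    obtain ⟨a, ha⟩ := hcard
    have hmem : a ∈ (A ×ˢ B).filter (fun q => q.1 + q.2 = k) := by
      rw [ha]; exact Finset.mem_singleton_self a
    simp only [Finset.mem_filter, Finset.mem_product] at hmem
    refine ⟨a, ⟨hmem.1.1, hmem.1.2, hmem.2⟩, ?_⟩
    intro y hy
    have : y ∈ (A ×ˢ B).filter (fun q => q.1 + q.2 = k) := by
      simp only [Finset.mem_filter, Finset.mem_product]
      exact ⟨⟨hy.1, hy.2.1⟩, hy.2.2⟩
    rw [ha, Finset.mem_singleton] at this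
    exact this

lemma fcode_mul (A B : Finset ℕ) (hlt : ∀ q ∈ A ×ˢ B, q.1 + q.2 < 31) :
    fcode A * fcode B =
    ∑ k ∈ Finset.range 31,
      ((A ×ˢ B).filter (fun q => q.1 + q.2 = k)).card * 17^k := by
  have h1 : fcode A * fcode B = ∑ q ∈ A ×ˢ B, 17^(q.1 + q.2) := by
    rw [fcode, fcode, Finset.sum_mul_sum, Finset.sum_product]
    exact Finset.sum_congr rfl fun a _ => Finset.sum_congr rfl fun b _ => (pow_add 17 a b).symm
  rw [h1]
  rw [← Finset.sum_fiberwise_of_maps_to (g := fun q : ℕ × ℕ => q.1 + q.2)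
      (t := Finset.range 31) (fun q hq => Finset.mem_range.mpr (hlt q hq))
      (fun q => 17^(q.1 + q.2))]
  refine Finset.sum_congr rfl fun k _ => ?_
  rw [Finset.sum_congr rfl (fun q hq => by
      rw [(Finset.mem_filter.mp hq).2]), Finset.sum_const, smul_eq_mul]

lemma Ncode_eq :
    Ncode = ∑ k ∈ Finset.range 31, (if k < 16 then 1 else 0) * 17^k := by decide

lemma mem_Pset (A : Finset ℕ) :
    A ∈ Pset ↔ A ⊆ Finset.range 16 ∧ A.card = 4 ∧ 0 ∈ A := by
  simp only [Pset, Finset.mem_filter, Finset.mem_powersetCard]; tauto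

set_option maxHeartbeats 1000000 in
lemma main_iff (A B : Finset ℕ) :
    (A.card = 4 ∧ B.card = 4 ∧
      ∀ k : ℕ, k < 16 → ∃! q : ℕ × ℕ, q.1 ∈ A ∧ q.2 ∈ B ∧ q.1 + q.2 = k) ↔
    (A ∈ Pset ∧ B ∈ Pset ∧ fcode A * fcode B = Ncode) := by
  constructor
  · rintro ⟨hA, hB, h⟩
    -- 0 ∈ A and 0 ∈ B
    obtain ⟨q0, ⟨hq01, hq02, hq03⟩, -⟩ := h 0 (by norm_num)
    have hA0 : 0 ∈ A := by
      have : q0.1 = 0 := by omega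
      rwa [this] at hq01
    have hB0 : 0 ∈ B := by
      have : q0.2 = 0 := by omega
      rwa [this] at hq02
    -- every pair's sum is < 16
    have hcardP : (A ×ˢ B).card = 16 := by rw [Finset.card_product, hA, hB]
    have hsurj := Finset.surj_on_of_inj_on_of_card_le
      (s := Finset.range 16) (t := A ×ˢ B)
      (fun k hk => (h k (Finset.mem_range.mp hk)).choose)
      (fun k hk => by
        have hs := (h k (Finset.mem_range.mp hk)).choose_spec.1
        exact Finset.mem_product.mpr ⟨hs.1, hs.2.1⟩)
      (fun k1 k2 hk1 hk2 heq => by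
        have h1 := (h k1 (Finset.mem_range.mp hk1)).choose_spec.1
        have h2 := (h k2 (Finset.mem_range.mp hk2)).choose_spec.1
        dsimp only at heq h1 h2
        rw [heq] at h1
        omega)
      (by rw [hcardP]; simp)
    have hlt : ∀ q ∈ A ×ˢ B, q.1 + q.2 < 16 := by
      intro q hq
      obtain ⟨k, hk, hqe⟩ := hsurj q hq
      have hs := (h k (Finset.mem_range.mp hk)).choose_spec.1
      dsimp only at hqe hs
      rw [← hqe] at hs
      have := Finset.mem_range.mp hk
      omega
    have hsubA : A ⊆ Finset.range 16 := by
      intro a ha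
      have := hlt (a, 0) (Finset.mem_product.mpr ⟨ha, hB0⟩)
      simp only [Finset.mem_range]; omega
    have hsubB : B ⊆ Finset.range 16 := by
      intro b hb
      have := hlt (0, b) (Finset.mem_product.mpr ⟨hA0, hb⟩)
      simp only [Finset.mem_range]; omega
    refine ⟨(mem_Pset A).mpr ⟨hsubA, hA, hA0⟩, (mem_Pset B).mpr ⟨hsubB, hB, hB0⟩, ?_⟩
    rw [fcode_mul A B (fun q hq => by have := hlt q hq; omega), Ncode_eq]
    refine Finset.sum_congr rfl fun k hk => ?_
    by_cases hk16 : k < 16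
    · rw [if_pos hk16, (exu_iff A B k).mp (h k hk16)]
    · rw [if_neg hk16]
      have : (A ×ˢ B).filter (fun q => q.1 + q.2 = k) = ∅ := by
        rw [Finset.filter_eq_empty_iff]
        intro q hq
        have := hlt q hq
        omega
      rw [this]
      simp
  · rintro ⟨hA, hB, hf⟩
    rw [mem_Pset] at hA hB
    obtain ⟨hsubA, hA4, -⟩ := hA
    obtain ⟨hsubB, hB4, -⟩ := hB
    have hlt : ∀ q ∈ A ×ˢ B, q.1 + q.2 < 31 := by
      intro q hq
      rw [Finset.mem_product] at hq
      have h1 := Finset.mem_range.mp (hsubA hq.1)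
      have h2 := Finset.mem_range.mp (hsubB hq.2)
      omega
    rw [fcode_mul A B hlt, Ncode_eq] at hf
    have hdig : ∀ i, i < 31 →
        ((A ×ˢ B).filter (fun q => q.1 + q.2 = i)).card = if i < 16 then 1 else 0 := by
      refine digit_unique 31 _ _ (fun i _ => ?_) (fun i _ => by split <;> norm_num) hf
      calc ((A ×ˢ B).filter (fun q => q.1 + q.2 = i)).card
          ≤ (A ×ˢ B).card := Finset.card_filter_le _ _
        _ = 16 := by rw [Finset.card_product, hA4, hB4]
        _ < 17 := by norm_num
    refine ⟨hA4, hB4, fun k hk => ?_⟩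
    rw [exu_iff]
    have := hdig k (by omega)
    simpa [hk] using this

set_option maxRecDepth 1000000 in
set_option maxHeartbeats 8000000 in
theorem sixteen_cell_count :
    {p : Finset ℕ × Finset ℕ |
        p.1.card = 4 ∧ p.2.card = 4 ∧
        ∀ k : ℕ, k < 16 →
          ∃! q : ℕ × ℕ, q.1 ∈ p.1 ∧ q.2 ∈ p.2 ∧ q.1 + q.2 = k}.ncard = 6 := by
  have hset : {p : Finset ℕ × Finset ℕ |
        p.1.card = 4 ∧ p.2.card = 4 ∧
        ∀ k : ℕ, k < 16 →
          ∃! q : ℕ × ℕ, q.1 ∈ p.1 ∧ q.2 ∈ p.2 ∧ q.1 + q.2 = k} = ↑Tset := by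
    ext p
    rw [Set.mem_setOf_eq, Finset.mem_coe, mem_Tset]
    exact main_iff p.1 p.2
  rw [hset, Set.ncard_coe_finset]
  decide
end

section
/- There are exactly 6 ordered pairs (A, B) of 9-element finite sets of natural numbers such that every natural number k with k < 81 can be written uniquely as a + b with a ∈ A and b ∈ B; equivalently, up to swapping A and B there are exactly 3 such solutions. -/
/-!
Write `f_A = ∑_{a ∈ A} X ^ a ∈ ℤ[X]`. Every `k < 81` is uniquely a sum `a + b` exactly when
`f_A * f_B = 1 + X + ⋯ + X ^ 80 = Φ₃ Φ₉ Φ₂₇ Φ₈₁`. The cyclotomic polynomials are prime in the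
UFD `ℤ[X]`, so `f_A` and `f_B` are, up to sign, complementary subproducts of these four factors.
Evaluating at `1`, where each `Φ_{3^j}` takes the value `3`, fixes the signs and forces `f_A` to
take exactly two of the factors. Since `A` is the support of `f_A`, at most `choose 4 2 = 6` pairs
remain, and six explicit pairs are checked directly.
-/

open Polynomial Finset

noncomputable def genPoly (A : Finset ℕ) : ℤ[X] := ∑ a ∈ A, X ^ a

def addRepr (A B : Finset ℕ) (k : ℕ) : Finset (ℕ × ℕ) :=
  (A ×ˢ B).filter fun q => q.1 + q.2 = k

section genPoly

variable (A B : Finset ℕ)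

theorem coeff_genPoly (n : ℕ) : (genPoly A).coeff n = if n ∈ A then 1 else 0 := by
  simp [genPoly, coeff_X_pow]

theorem support_genPoly : (genPoly A).support = A := by
  ext n
  simp [coeff_genPoly]

theorem eval_one_genPoly : (genPoly A).eval 1 = #A := by
  simp [genPoly, eval_finsetSum]

theorem coeff_genPoly_mul (k : ℕ) : (genPoly A * genPoly B).coeff k = #(addRepr A B k) := by
  rw [genPoly, genPoly, sum_mul_sum, ← sum_product', finsetSum_coeff, addRepr, card_filter]
  push_cast
  refine sum_congr rfl fun q _ => ?_
  simp [← pow_add, coeff_X_pow, eq_comm]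

theorem existsUnique_add_eq_iff_card_addRepr (k : ℕ) :
    (∃! q : ℕ × ℕ, q.1 ∈ A ∧ q.2 ∈ B ∧ q.1 + q.2 = k) ↔ #(addRepr A B k) = 1 := by
  simp [card_eq_one_iff_existsUnique, addRepr, and_assoc]

theorem add_lt_of_card_addRepr_eq_one {n : ℕ} (hn : #A * #B = n)
    (h : ∀ k < n, #(addRepr A B k) = 1) : ∀ q ∈ A ×ˢ B, q.1 + q.2 < n := by
  -- the `n` pairs with sum below `n` already exhaust the `n` pairs of `A ×ˢ B`
  rw [← card_filter_eq_iff, card_product, hn]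
  calc #((A ×ˢ B).filter fun q => q.1 + q.2 < n)
      = ∑ k ∈ range n, #(addRepr A B k) := by
        rw [card_eq_sum_card_fiberwise fun q hq => mem_range.mpr (mem_filter.mp hq).2]
        refine sum_congr rfl fun k hk => ?_
        rw [filter_filter, addRepr]
        exact congrArg card <| filter_congr fun q _ =>
          and_iff_right_of_imp fun hq => hq ▸ mem_range.mp hk
    _ = n := by simp [sum_congr rfl fun k hk => h k (mem_range.mp hk)]

theorem genPoly_mul_eq_genPoly_range {n : ℕ} (hn : #A * #B = n)
    (h : ∀ k < n, #(addRepr A B k) = 1) : genPoly A * genPoly B = genPoly (range n) := by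
  ext k
  rw [coeff_genPoly_mul, coeff_genPoly]
  split_ifs with hk
  · exact_mod_cast h k (mem_range.mp hk)
  · rw [Int.natCast_eq_zero, card_eq_zero, addRepr, filter_eq_empty_iff]
    exact fun q hq hqk => hk <| mem_range.mpr <| hqk ▸ add_lt_of_card_addRepr_eq_one A B hn h q hq

end genPoly

theorem sum_range_prime_pow_eq_prod_cyclotomic {R : Type*} [CommRing R] {p : ℕ}
    (hp : p.Prime) (n : ℕ) :
    ∑ i ∈ range (p ^ n), (X : R[X]) ^ i = ∏ i ∈ range n, cyclotomic (p ^ (i + 1)) R := by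
  have h := prod_cyclotomic_eq_X_pow_sub_one (pow_pos hp.pos n) R
  rw [Nat.prod_divisors_prime_pow hp, prod_range_succ', pow_zero, cyclotomic_one,
    ← geom_sum_mul] at h
  exact (monic_X_sub_C 1).isRegular.right h.symm

theorem exists_subset_associated_prod_of_mul_eq_prod {α ι : Type*} [CommMonoidWithZero α]
    [IsCancelMulZero α] [DecidableEq ι] {f : ι → α} {s : Finset ι} (hs : ∀ i ∈ s, Prime (f i))
    {x y : α} (h : x * y = ∏ i ∈ s, f i) :
    ∃ t ⊆ s, Associated x (∏ i ∈ t, f i) ∧ Associated y (∏ i ∈ s \ t, f i) := by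
  induction s using Finset.induction_on generalizing x y with
  | empty =>
    rw [prod_empty] at h
    exact ⟨∅, subset_rfl, by simpa using IsUnit.of_mul_eq_one y h,
      by simpa using IsUnit.of_mul_eq_one_right x h⟩
  | insert j s hj ih =>
    have hs' : ∀ i ∈ s, Prime (f i) := fun i hi => hs i (mem_insert_of_mem hi)
    have hpj := hs j (mem_insert_self j s)
    rw [prod_insert hj] at h
    rcases hpj.dvd_or_dvd ⟨_, h⟩ with ⟨x', rfl⟩ | ⟨y', rfl⟩
    · obtain ⟨t, hts, hx, hy⟩ :=
        ih hs' (x := x') (y := y) (mul_left_cancel₀ hpj.ne_zero (by rw [← h, mul_assoc]))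
      refine ⟨insert j t, insert_subset_insert j hts, ?_, ?_⟩
      · rw [prod_insert (fun hjt => hj (hts hjt))]
        exact hx.mul_left _
      · rwa [insert_sdiff_insert, sdiff_insert_of_notMem hj]
    · obtain ⟨t, hts, hx, hy⟩ :=
        ih hs' (x := x) (y := y') (mul_left_cancel₀ hpj.ne_zero (by rw [← h, mul_left_comm]))
      refine ⟨t, hts.trans (subset_insert j s), hx, ?_⟩
      rw [insert_sdiff_of_notMem s (fun hjt => hj (hts hjt)),
        prod_insert (fun hjs => hj (mem_sdiff.mp hjs).1)]
      exact hy.mul_left _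

theorem eq_of_associated_of_eval_pos {P Q : ℤ[X]} (h : Associated P Q) {x : ℤ}
    (hP : 0 < P.eval x) (hQ : 0 < Q.eval x) : P = Q := by
  obtain ⟨u, rfl⟩ := h
  obtain ⟨r, hr, hru⟩ := Polynomial.isUnit_iff.mp u.isUnit
  rcases Int.isUnit_iff.mp hr with rfl | rfl
  · simp [← hru]
  · rw [← hru, eval_mul, eval_C] at hQ
    linarith

noncomputable def cyclotomicSupports (p n : ℕ) (t : Finset ℕ) : Finset ℕ × Finset ℕ :=
  ((∏ i ∈ t, cyclotomic (p ^ (i + 1)) ℤ).support,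
    (∏ i ∈ range n \ t, cyclotomic (p ^ (i + 1)) ℤ).support)

theorem exists_eq_cyclotomicSupports {p n : ℕ} (hp : p.Prime) {A B : Finset ℕ}
    (h : genPoly A * genPoly B = genPoly (range (p ^ n))) :
    ∃ t ⊆ range n, p ^ #t = #A ∧ (A, B) = cyclotomicSupports p n t := by
  have := Fact.mk hp
  have eval_prod_cyclotomic (s : Finset ℕ) :
      (∏ i ∈ s, cyclotomic (p ^ (i + 1)) ℤ).eval 1 = (p ^ #s : ℕ) := by
    simp [eval_prod]
  have hcard : #A * #B = p ^ n := by
    have := congrArg (eval 1) h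
    simp only [eval_mul, eval_one_genPoly, card_range] at this
    exact_mod_cast this
  have hApos : 0 < #A := (CanonicallyOrderedAdd.mul_pos.mp (hcard ▸ pow_pos hp.pos n)).1
  have hBpos : 0 < #B := (CanonicallyOrderedAdd.mul_pos.mp (hcard ▸ pow_pos hp.pos n)).2
  change _ = ∑ i ∈ range (p ^ n), X ^ i at h
  rw [sum_range_prime_pow_eq_prod_cyclotomic hp] at h
  obtain ⟨t, hts, hA, hB⟩ := exists_subset_associated_prod_of_mul_eq_prod
    (fun i _ => (cyclotomic.irreducible (pow_pos hp.pos _)).prime) h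
  have hA' := eq_of_associated_of_eval_pos hA (x := 1)
    (by rw [eval_one_genPoly]; exact_mod_cast hApos)
    (by rw [eval_prod_cyclotomic]; exact_mod_cast pow_pos hp.pos _)
  have hB' := eq_of_associated_of_eval_pos hB (x := 1)
    (by rw [eval_one_genPoly]; exact_mod_cast hBpos)
    (by rw [eval_prod_cyclotomic]; exact_mod_cast pow_pos hp.pos _)
  refine ⟨t, hts, ?_, ?_⟩
  · exact Nat.cast_injective <|
      (eval_prod_cyclotomic t).symm.trans (by rw [← hA', eval_one_genPoly])
  · rw [cyclotomicSupports, ← hA', ← hB', support_genPoly, support_genPoly]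

theorem addTable_subset_image_cyclotomicSupports {p : ℕ} (hp : p.Prime) (m n : ℕ) :
    {AB : Finset ℕ × Finset ℕ | #AB.1 = p ^ m ∧ #AB.1 * #AB.2 = p ^ n ∧
        ∀ k < p ^ n, #(addRepr AB.1 AB.2 k) = 1} ⊆
      ((range n).powersetCard m).image (cyclotomicSupports p n) := by
  rintro ⟨A, B⟩ ⟨hA, hAB, h⟩
  obtain ⟨t, hts, hcard, hsupp⟩ :=
    exists_eq_cyclotomicSupports hp (genPoly_mul_eq_genPoly_range A B hAB h)
  exact mem_image.mpr ⟨t, mem_powersetCard.mpr ⟨hts, Nat.pow_right_injective hp.two_le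
    (hcard.trans hA)⟩, hsupp.symm⟩

/-- `A` consists of the numbers below `81` whose base-3 digits vanish outside two of the four
positions, and `B` of those whose digits vanish in these two positions. -/
def solutions81 : Finset (Finset ℕ × Finset ℕ) :=
  {({0, 1, 2, 3, 4, 5, 6, 7, 8}, {0, 9, 18, 27, 36, 45, 54, 63, 72}),
    ({0, 9, 18, 27, 36, 45, 54, 63, 72}, {0, 1, 2, 3, 4, 5, 6, 7, 8}),
    ({0, 1, 2, 9, 10, 11, 18, 19, 20}, {0, 3, 6, 27, 30, 33, 54, 57, 60}),
    ({0, 3, 6, 27, 30, 33, 54, 57, 60}, {0, 1, 2, 9, 10, 11, 18, 19, 20}),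
    ({0, 1, 2, 27, 28, 29, 54, 55, 56}, {0, 3, 6, 9, 12, 15, 18, 21, 24}),
    ({0, 3, 6, 9, 12, 15, 18, 21, 24}, {0, 1, 2, 27, 28, 29, 54, 55, 56})}

theorem card_solutions81 : #solutions81 = 6 := by decide

theorem forall_mem_solutions81 :
    ∀ p ∈ solutions81, #p.1 = 9 ∧ #p.2 = 9 ∧ ∀ k < 81, #(addRepr p.1 p.2 k) = 1 := by
  decide

theorem eightyone_cell_count :
    {p : Finset ℕ × Finset ℕ |
        p.1.card = 9 ∧ p.2.card = 9 ∧
        ∀ k : ℕ, k < 81 →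
          ∃! q : ℕ × ℕ, q.1 ∈ p.1 ∧ q.2 ∈ p.2 ∧ q.1 + q.2 = k}.ncard = 6 := by
  simp only [existsUnique_add_eq_iff_card_addRepr]
  have hupper : {AB : Finset ℕ × Finset ℕ | #AB.1 = 9 ∧ #AB.2 = 9 ∧
      ∀ k < 81, #(addRepr AB.1 AB.2 k) = 1} ⊆ _ := fun AB ⟨hA, hB, h⟩ =>
    addTable_subset_image_cyclotomicSupports Nat.prime_three 2 4 ⟨hA, by rw [hA, hB]; rfl, h⟩
  refine le_antisymm ?_ ?_
  · calc _ ≤ (((range 4).powersetCard 2).image (cyclotomicSupports 3 4) : Set _).ncard :=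
          Set.ncard_le_ncard hupper
      _ ≤ 6 := by rw [Set.ncard_coe_finset]; exact card_image_le.trans (by simp [Nat.choose])
  · calc 6 = (solutions81 : Set _).ncard := by rw [Set.ncard_coe_finset, card_solutions81]
      _ ≤ _ := Set.ncard_le_ncard (fun p hp => forall_mem_solutions81 p hp)
          ((finite_toSet _).subset hupper)
end
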